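/- arXiv:2509.00553 — 8 statements merged into one kernel-verified Lean document; each statement's English description precedes it below -/
import Mathlib

section
/- Let A = [A11 A12; A21 A22] and B = [B11 B12; B21 B22] be square block matrices over a field K with A22 and B22 invertible and A/A22, B/B22 of the same size k×k, and let X be an invertible k×k matrix over K. Define C as the 4×4 block matrix with block rows [0, A12, 0, A11; B21, 0, B22, 0; 0, A22, 0, A21; B11, 0, B12, -X], partitioned so that C11 = 0 (the upper-left k×k block) and C22 is the remaining 3×3 block matrix. Then C22 is invertible and the Schur complement C/C22 equals (A/A22) X⁻¹ (B/B22). -/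
open Matrix

/-!
Up to the order of its block rows and columns, `C22` is block triangular with diagonal
blocks `A22`, `B22` and `-X`, so its inverse `W` can be written down explicitly (a right
inverse suffices, since square matrices over a field have two-sided inverses).
Multiplying out `-(C12 W C21)` is then a polynomial identity in the blocks, in which
`A22⁻¹`, `B22⁻¹`, `X⁻¹` occur only as blocks of `W`, and it factors as
`(A/A22) X⁻¹ (B/B22)`.
-/

namespace Matrix

variable {R n p q : Type*} [Ring R] [Fintype n] [Fintype p] [Fintype q]

def schurProdCore (A21 : Matrix p n R) (A22 : Matrix p p R) (B12 : Matrix n q R)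
    (B22 : Matrix q q R) (X : Matrix n n R) : Matrix (q ⊕ (p ⊕ n)) (p ⊕ (q ⊕ n)) R :=
  fromBlocks 0 (fromCols B22 0) (fromRows A22 0) (fromBlocks 0 A21 B12 (-X))

/-- With `A22' = A22⁻¹`, `B22' = B22⁻¹`, `X' = X⁻¹`, the inverse of `schurProdCore`. -/
def schurProdCoreInv (A21 : Matrix p n R) (A22' : Matrix p p R) (B12 : Matrix n q R)
    (B22' : Matrix q q R) (X' : Matrix n n R) : Matrix (p ⊕ (q ⊕ n)) (q ⊕ (p ⊕ n)) R :=
  fromBlocks (-(A22' * A21 * X' * B12 * B22')) (fromCols A22' (A22' * A21 * X'))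
    (fromRows B22' (X' * B12 * B22')) (fromBlocks 0 0 0 (-X'))

theorem schurProdCore_mul_schurProdCoreInv [DecidableEq n] [DecidableEq p] [DecidableEq q]
    {A21 : Matrix p n R} {A22 A22' : Matrix p p R} {B12 : Matrix n q R}
    {B22 B22' : Matrix q q R} {X X' : Matrix n n R}
    (hA : A22 * A22' = 1) (hB : B22 * B22' = 1) (hX : X * X' = 1) :
    schurProdCore A21 A22 B12 B22 X * schurProdCoreInv A21 A22' B12 B22' X' = 1 := by
  simp only [schurProdCore, schurProdCoreInv, fromBlocks_multiply, fromCols_mul_fromRows,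
    fromCols_mul_fromBlocks, fromBlocks_mul_fromRows, fromRows_mul, mul_fromCols,
    Matrix.zero_mul, Matrix.mul_zero, add_zero, zero_add, Matrix.mul_neg, Matrix.neg_mul,
    neg_neg, neg_zero, ← Matrix.mul_assoc, hA, hB, hX, Matrix.one_mul, neg_add_cancel,
    add_neg_cancel, fromCols_zero, fromCols_fromRows_eq_fromBlocks, fromBlocks_add,
    fromBlocks_one]

theorem neg_mul_schurProdCoreInv_mul (A11 : Matrix n n R) (A12 : Matrix n p R)
    (A21 : Matrix p n R) (A22' : Matrix p p R) (B11 : Matrix n n R) (B12 : Matrix n q R)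
    (B21 : Matrix q n R) (B22' : Matrix q q R) (X' : Matrix n n R) :
    -(fromCols A12 (fromCols (0 : Matrix n q R) A11) * schurProdCoreInv A21 A22' B12 B22' X' *
        fromRows B21 (fromRows (0 : Matrix p n R) B11)) =
      (A11 - A12 * A22' * A21) * X' * (B11 - B12 * B22' * B21) := by
  simp only [schurProdCoreInv, fromCols_mul_fromBlocks, fromCols_mul_fromRows, mul_fromCols,
    Matrix.zero_mul, Matrix.mul_zero, add_zero, zero_add, Matrix.mul_neg, Matrix.neg_mul,
    Matrix.add_mul, Matrix.sub_mul, Matrix.mul_sub, ← Matrix.mul_assoc]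
  abel

end Matrix

/-- product of two Schur complements through `X⁻¹` is realized by the
block matrix `C` with block rows `[0, A12, 0, A11; B21, 0, B22, 0; 0, A22, 0, A21;
B11, 0, B12, -X]`: the block `C22` (everything but the upper-left k×k block) is
invertible and the Schur complement `C/C22 = 0 - C12 C22⁻¹ C21` equals
`(A/A22) X⁻¹ (B/B22)`. -/
theorem stmt1 (K : Type*) [Field K] (k a b : ℕ)
    (A11 : Matrix (Fin k) (Fin k) K) (A12 : Matrix (Fin k) (Fin a) K)
    (A21 : Matrix (Fin a) (Fin k) K) (A22 : Matrix (Fin a) (Fin a) K)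
    (B11 : Matrix (Fin k) (Fin k) K) (B12 : Matrix (Fin k) (Fin b) K)
    (B21 : Matrix (Fin b) (Fin k) K) (B22 : Matrix (Fin b) (Fin b) K)
    (X : Matrix (Fin k) (Fin k) K)
    (hA22 : IsUnit A22) (hB22 : IsUnit B22) (hX : IsUnit X) :
    let C12 : Matrix (Fin k) (Fin a ⊕ (Fin b ⊕ Fin k)) K := Matrix.of fun i j =>
      match j with
      | .inl ja => A12 i ja
      | .inr (.inl _) => 0
      | .inr (.inr jk) => A11 i jk
    let C21 : Matrix (Fin b ⊕ (Fin a ⊕ Fin k)) (Fin k) K := Matrix.of fun i j =>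
      match i with
      | .inl ib => B21 ib j
      | .inr (.inl _) => 0
      | .inr (.inr ik) => B11 ik j
    let C22 : Matrix (Fin b ⊕ (Fin a ⊕ Fin k)) (Fin a ⊕ (Fin b ⊕ Fin k)) K :=
      Matrix.of fun i j =>
      match i, j with
      | .inl ib, .inr (.inl jb) => B22 ib jb
      | .inl _, _ => 0
      | .inr (.inl ia), .inl ja => A22 ia ja
      | .inr (.inl ia), .inr (.inr jk) => A21 ia jk
      | .inr (.inl _), _ => 0
      | .inr (.inr ik), .inr (.inl jb) => B12 ik jb
      | .inr (.inr ik), .inr (.inr jk) => -X ik jk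
      | .inr (.inr _), _ => 0
    ∃ W : Matrix (Fin a ⊕ (Fin b ⊕ Fin k)) (Fin b ⊕ (Fin a ⊕ Fin k)) K,
      C22 * W = 1 ∧ W * C22 = 1 ∧
      (0 : Matrix (Fin k) (Fin k) K) - C12 * W * C21
        = (A11 - A12 * A22⁻¹ * A21) * X⁻¹ * (B11 - B12 * B22⁻¹ * B21) := by
  intro C12 C21 C22
  have hC12 : C12 = fromCols A12 (fromCols 0 A11) := by ext i (j | j | j) <;> rfl
  have hC21 : C21 = fromRows B21 (fromRows 0 B11) := by ext (i | i | i) j <;> rfl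
  have hC22 : C22 = schurProdCore A21 A22 B12 B22 X := by
    ext (i | i | i) (j | j | j) <;> rfl
  have hC22W : C22 * schurProdCoreInv A21 A22⁻¹ B12 B22⁻¹ X⁻¹ = 1 := hC22 ▸
    schurProdCore_mul_schurProdCoreInv (mul_nonsing_inv _ (A22.isUnit_iff_isUnit_det.mp hA22))
      (mul_nonsing_inv _ (B22.isUnit_iff_isUnit_det.mp hB22))
      (mul_nonsing_inv _ (X.isUnit_iff_isUnit_det.mp hX))
  have hcard :
      Fintype.card (Fin b ⊕ (Fin a ⊕ Fin k)) = Fintype.card (Fin a ⊕ (Fin b ⊕ Fin k)) := by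
    simp only [Fintype.card_sum, Fintype.card_fin]
    omega
  refine ⟨_, hC22W, (mul_eq_one_comm_of_card_eq _ _ _ hcard).mp hC22W, ?_⟩
  rw [hC12, hC21, zero_sub, neg_mul_schurProdCoreInv_mul]
end

section
/- Let A = [A11 A12; A21 A22] be a square block matrix over a field K with A22 invertible and A/A22 of size k×k. Define B as the block matrix with block rows [A11 + A11ᵀ, A21ᵀ, A12; A21, 0, A22; A12ᵀ, A22ᵀ, 0], with B11 = A11 + A11ᵀ and B22 the lower-right 2×2 block part. Then B22 is invertible and B/B22 = (A/A22) + (A/A22)ᵀ. Moreover B is symmetric if partitioned accordingly. -/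
/-!
`B22 = [0, A22; A22ᵀ, 0]` is invertible with inverse `[0, A22⁻ᵀ; A22⁻¹, 0]`, so the cross term
`B12 B22⁻¹ B21` of the Schur complement splits as `A12 A22⁻¹ A21 + (A12 A22⁻¹ A21)ᵀ`, which is
exactly what is subtracted from `A11 + A11ᵀ` on the right-hand side.
-/

open Matrix

namespace Matrix

section AntidiagonalBlocks

variable {n R : Type*} [Fintype n] [DecidableEq n] [CommRing R] {B C : Matrix n n R}

theorem fromBlocks_zero₁₁_zero₂₂_mul_inv (hB : IsUnit B) (hC : IsUnit C) :
    fromBlocks 0 B C 0 * fromBlocks 0 C⁻¹ B⁻¹ 0 = 1 := by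
  rw [fromBlocks_multiply, mul_nonsing_inv _ ((isUnit_iff_isUnit_det B).mp hB),
    mul_nonsing_inv _ ((isUnit_iff_isUnit_det C).mp hC)]
  simp only [Matrix.mul_zero, Matrix.zero_mul, add_zero, zero_add, fromBlocks_one]

theorem isUnit_fromBlocks_zero₁₁_zero₂₂ (hB : IsUnit B) (hC : IsUnit C) :
    IsUnit (fromBlocks 0 B C 0) :=
  (isUnit_iff_isUnit_det _).mpr
    (isUnit_det_of_right_inverse (fromBlocks_zero₁₁_zero₂₂_mul_inv hB hC))

theorem inv_fromBlocks_zero₁₁_zero₂₂ (hB : IsUnit B) (hC : IsUnit C) :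
    (fromBlocks 0 B C 0)⁻¹ = fromBlocks 0 C⁻¹ B⁻¹ 0 :=
  inv_eq_right_inv (fromBlocks_zero₁₁_zero₂₂_mul_inv hB hC)

end AntidiagonalBlocks

theorem fromCols_mul_fromBlocks_zero₁₁_zero₂₂_mul_fromRows {m l n₁ n₂ R : Type*}
    [Fintype n₁] [Fintype n₂] [Semiring R]
    (X : Matrix m n₁ R) (Y : Matrix m n₂ R) (P : Matrix n₁ n₂ R) (Q : Matrix n₂ n₁ R)
    (U : Matrix n₁ l R) (V : Matrix n₂ l R) :
    fromCols X Y * fromBlocks 0 P Q 0 * fromRows U V = X * P * V + Y * Q * U := by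
  rw [fromCols_mul_fromBlocks, fromCols_mul_fromRows]
  simp only [Matrix.mul_zero, add_zero, add_comm]

end Matrix

/-- symmetrization of a Schur complement.  With
`B = [A11 + A11ᵀ, A21ᵀ, A12; A21, 0, A22; A12ᵀ, A22ᵀ, 0]`, the lower-right 2×2
block part `B22` is invertible, `B/B22 = (A/A22) + (A/A22)ᵀ`, and `B` is symmetric. -/
theorem stmt2 (K : Type*) [Field K] (k a : ℕ)
    (A11 : Matrix (Fin k) (Fin k) K) (A12 : Matrix (Fin k) (Fin a) K)
    (A21 : Matrix (Fin a) (Fin k) K) (A22 : Matrix (Fin a) (Fin a) K)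
    (hA22 : IsUnit A22) :
    let B12 : Matrix (Fin k) (Fin a ⊕ Fin a) K :=
      Matrix.of fun i j => Sum.elim (fun ja => A21ᵀ i ja) (fun ja => A12 i ja) j
    let B21 : Matrix (Fin a ⊕ Fin a) (Fin k) K :=
      Matrix.of fun i j => Sum.elim (fun ia => A21 ia j) (fun ia => A12ᵀ ia j) i
    let B22 : Matrix (Fin a ⊕ Fin a) (Fin a ⊕ Fin a) K :=
      Matrix.fromBlocks 0 A22 A22ᵀ 0
    IsUnit B22 ∧
    (A11 + A11ᵀ) - B12 * B22⁻¹ * B21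
      = (A11 - A12 * A22⁻¹ * A21) + (A11 - A12 * A22⁻¹ * A21)ᵀ ∧
    (Matrix.fromBlocks (A11 + A11ᵀ) B12 B21 B22)ᵀ
      = Matrix.fromBlocks (A11 + A11ᵀ) B12 B21 B22 := by
  intro B12 B21 B22
  have hB12 : B12 = fromCols A21ᵀ A12 := rfl
  have hB21 : B21 = fromRows A21 A12ᵀ := by ext (i | i) j <;> rfl
  have hA22T : IsUnit A22ᵀ := (isUnit_transpose A22).mpr hA22
  refine ⟨isUnit_fromBlocks_zero₁₁_zero₂₂ hA22 hA22T, ?_, ?_⟩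
  · rw [hB12, hB21, inv_fromBlocks_zero₁₁_zero₂₂ hA22 hA22T,
      fromCols_mul_fromBlocks_zero₁₁_zero₂₂_mul_fromRows, ← transpose_nonsing_inv,
      ← transpose_mul, ← transpose_mul, ← Matrix.mul_assoc, transpose_sub]
    abel
  · refine IsSymm.fromBlocks (isSymm_add_transpose_self A11) ?_
      (IsSymm.fromBlocks isSymm_zero rfl isSymm_zero)
    rw [hB12, hB21, transpose_fromCols, transpose_transpose]
end

section
/- Let R be a commutative ring with identity of characteristic 2 and let A be a symmetric m×m matrix over R. Then det A = Σ_σ Π_{i=1}^m a_{i,σ(i)}, where the sum ranges over all involutive permutations σ of {1,…,m} (i.e., permutations with σ = σ⁻¹). -/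
open Matrix

/-!
Modulo 2 every sign is `1`, so `det A` is the permanent `∑_σ ∏_i a_{i,σ(i)}`. For symmetric `A`
the terms of `σ` and `σ⁻¹` coincide, so the permutations with `σ ≠ σ⁻¹` cancel in pairs and
only the involutions survive.
-/

theorem Finset.sum_eq_sum_filter_mul_self_eq_one_of_inv {G R : Type*} [Group G] [Fintype G]
    [DecidableEq G] [Semiring R] [CharP R 2] (f : G → R) (hf : ∀ g, f g⁻¹ = f g) :
    ∑ g, f g = ∑ g with g * g = 1, f g := by
  have hcancel : ∑ g with ¬g * g = 1, f g = 0 := by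
    refine Finset.sum_involution (fun g _ => g⁻¹)
      (fun g _ => by rw [hf, CharTwo.add_self_eq_zero]) (fun g hg _ hinv => ?_)
      (fun g hg => ?_) (fun g _ => inv_inv g)
    · exact (Finset.mem_filter.mp hg).2 (by rw [← mul_inv_cancel g, hinv])
    · simp only [Finset.mem_filter, Finset.mem_univ, true_and] at hg ⊢
      rwa [← _root_.mul_inv_rev, inv_eq_one]
  rw [← Finset.sum_filter_add_sum_filter_not Finset.univ (fun g : G => g * g = 1), hcancel,
    add_zero]

namespace Matrix

variable {n R : Type*} [Fintype n]

theorem IsSymm.prod_perm_inv_apply [CommMonoid R] {A : Matrix n n R} (hA : A.IsSymm)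
    (σ : Equiv.Perm n) : ∏ i, A i (σ⁻¹ i) = ∏ i, A i (σ i) := by
  rw [← Equiv.prod_comp σ]
  exact Finset.prod_congr rfl fun i _ => by rw [Equiv.Perm.inv_eq_iff_eq.2 rfl, hA.apply]

variable [DecidableEq n]

theorem det_eq_permanent_of_charP_two [CommRing R] [CharP R 2] (A : Matrix n n R) :
    A.det = A.permanent := by
  rw [det_apply]
  refine Finset.sum_congr rfl fun σ _ => ?_
  rcases Int.units_eq_one_or (Equiv.Perm.sign σ) with h | h <;> simp [h, CharTwo.neg_eq]

theorem IsSymm.permanent_eq_sum_involutive [CommSemiring R] [CharP R 2] {A : Matrix n n R}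
    (hA : A.IsSymm) :
    A.permanent = ∑ σ : Equiv.Perm n with σ * σ = 1, ∏ i, A i (σ i) := by
  rw [← Finset.sum_eq_sum_filter_mul_self_eq_one_of_inv _ hA.prod_perm_inv_apply]
  exact Finset.sum_congr rfl fun σ _ => Finset.prod_congr rfl fun i _ => hA.apply _ _

end Matrix

/-- over a commutative ring of characteristic 2, the determinant of a
symmetric matrix equals the sum over all involutive permutations `σ` of the
products `∏ i, a_{i, σ(i)}`. -/
theorem stmt6 (R : Type*) [CommRing R] [CharP R 2] (m : ℕ)
    (A : Matrix (Fin m) (Fin m) R) (hA : Aᵀ = A) :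
    A.det = ∑ σ ∈ Finset.univ.filter (fun σ : Equiv.Perm (Fin m) => σ * σ = 1),
      ∏ i, A i (σ i) := by
  rw [det_eq_permanent_of_charP_two, IsSymm.permanent_eq_sum_involutive hA]
end

section
/- Let F be a field of characteristic 2, ℓ ∈ Fⁿ, R(ℓ²) = F[z]/⟨z₁²+ℓ₁²,…,zₙ²+ℓₙ²⟩, and for r ∈ R(ℓ²) let |r| ∈ F be the unique constant with r² = |r|². Then r is invertible in R(ℓ²) if and only if |r| ≠ 0, in which case r⁻¹ = |r|⁻² · r. -/
open MvPolynomial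

section SquareOfScalar

variable {F A : Type*} [Field F] [CommSemiring A] [Algebra F A] {r : A} {c : F}

theorem inv_sq_smul_mul_self_eq_one (h : r ^ 2 = algebraMap F A (c ^ 2)) (hc : c ≠ 0) :
    ((c⁻¹ ^ 2) • r) * r = 1 := by
  rw [smul_mul_assoc, ← sq, h, Algebra.smul_def, ← map_mul, inv_pow,
    inv_mul_cancel₀ (pow_ne_zero 2 hc), map_one]

theorem isUnit_iff_ne_zero_of_sq_eq_algebraMap_sq [Nontrivial A]
    (h : r ^ 2 = algebraMap F A (c ^ 2)) : IsUnit r ↔ c ≠ 0 := by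
  refine ⟨fun hr hc => ?_, fun hc => IsUnit.of_mul_eq_one_right _ (inv_sq_smul_mul_self_eq_one h hc)⟩
  have hr2 : IsUnit (r ^ 2) := hr.pow 2
  rw [h, hc, zero_pow two_ne_zero, map_zero] at hr2
  exact not_isUnit_zero hr2

end SquareOfScalar

section CharTwo

variable {σ R : Type*} [CommRing R] [CharP R 2]

/-- In characteristic two `zᵢ² + ℓᵢ² = (zᵢ + ℓᵢ)²`, so `z = ℓ` is a common root. -/
theorem span_X_sq_add_C_sq_le_ker_aeval (ℓ : σ → R) :
    Ideal.span (Set.range fun i => X i ^ 2 + C (ℓ i ^ 2)) ≤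
      RingHom.ker (aeval ℓ : MvPolynomial σ R →ₐ[R] R) := by
  rw [Ideal.span_le]
  rintro _ ⟨i, rfl⟩
  simp [CharTwo.add_self_eq_zero]

instance nontrivial_quotient_span_X_sq_add_C_sq [Nontrivial R] (ℓ : σ → R) :
    Nontrivial (MvPolynomial σ R ⧸ Ideal.span (Set.range fun i => X i ^ 2 + C (ℓ i ^ 2))) :=
  (Ideal.Quotient.lift _ _ fun _ ha => span_X_sq_add_C_sq_le_ker_aeval ℓ ha).domain_nontrivial

end CharTwo

/-- an element `r` of `R(ℓ²)` with absolute value `c` (i.e. `r² = c²`)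
is invertible iff `c ≠ 0`, in which case `r⁻¹ = c⁻² • r`. -/
theorem stmt9 (F : Type*) [Field F] [CharP F 2] (n : ℕ) (ℓ : Fin n → F)
    (r : MvPolynomial (Fin n) F ⧸
        Ideal.span (Set.range fun i : Fin n => X i ^ 2 + C (ℓ i ^ 2)))
    (c : F) (h : r ^ 2 = algebraMap F _ (c ^ 2)) :
    (IsUnit r ↔ c ≠ 0) ∧ (c ≠ 0 → ((c⁻¹ ^ 2) • r) * r = 1) :=
  ⟨isUnit_iff_ne_zero_of_sq_eq_algebraMap_sq h, inv_sq_smul_mul_self_eq_one h⟩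
end

section
/- Let F be an infinite field of characteristic 2 and let p ∈ F[z₁,…,zₙ] be a nonzero polynomial. Then there exists ℓ = (ℓ₁,…,ℓₙ) ∈ Fⁿ such that the image of p in the quotient ring F[z]/⟨z₁²+ℓ₁²,…,zₙ²+ℓₙ²⟩ is invertible. -/
open MvPolynomial

lemma sub_C_eval_mem_span {R : Type*} [CommRing R] {σ : Type*} (ℓ : σ → R)
    (q : MvPolynomial σ R) :
    q - C (eval ℓ q) ∈ Ideal.span (Set.range fun i : σ => X i - C (ℓ i)) := by
  induction q using MvPolynomial.induction_on with
  | C a => simp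
  | add p q hp hq =>
    have := add_mem hp hq
    convert this using 1
    rw [map_add, C_add]; ring
  | mul_X p i hp =>
    have h1 : (X i - C (ℓ i) : MvPolynomial σ R) ∈
        Ideal.span (Set.range fun i : σ => X i - C (ℓ i)) :=
      Ideal.subset_span ⟨i, rfl⟩
    have := add_mem (Ideal.mul_mem_left _ p h1) (Ideal.mul_mem_left _ (C (ℓ i)) hp)
    convert this using 1
    rw [map_mul, eval_X, C_mul]; ring

/-- over an infinite field of characteristic 2, every nonzero
polynomial has an invertible image in `F[z]/⟨z₁²+ℓ₁²,…,zₙ²+ℓₙ²⟩` for some `ℓ ∈ Fⁿ`. -/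
theorem stmt10 (F : Type*) [Field F] [CharP F 2] [Infinite F] (n : ℕ)
    (p : MvPolynomial (Fin n) F) (hp : p ≠ 0) :
    ∃ ℓ : Fin n → F,
      IsUnit (Ideal.Quotient.mk
        (Ideal.span (Set.range fun i : Fin n => X i ^ 2 + C (ℓ i ^ 2))) p) := by
  have hex : ∃ ℓ : Fin n → F, eval ℓ p ≠ 0 := by
    by_contra h
    push_neg at h
    exact hp (MvPolynomial.funext fun x => by simp [h x])
  obtain ⟨ℓ, hℓ⟩ := hex
  refine ⟨ℓ, ?_⟩
  set I : Ideal (MvPolynomial (Fin n) F) :=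
    Ideal.span (Set.range fun i : Fin n => X i ^ 2 + C (ℓ i ^ 2)) with hI
  set mk := Ideal.Quotient.mk I with hmk
  have hsq : ∀ i : Fin n, (X i - C (ℓ i) : MvPolynomial (Fin n) F) ^ 2
      = X i ^ 2 + C (ℓ i ^ 2) := by
    intro i
    have h2 : (2 : MvPolynomial (Fin n) F) = 0 := by
      exact_mod_cast CharP.cast_eq_zero (MvPolynomial (Fin n) F) 2
    rw [sub_sq, map_pow]
    rw [show (2 : MvPolynomial (Fin n) F) * X i * C (ℓ i)
        = 2 * (X i * C (ℓ i)) by ring, h2]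
    ring
  have hnil : IsNilpotent (mk (p - C (eval ℓ p))) := by
    have hmem := sub_C_eval_mem_span ℓ p
    have hle : Ideal.map mk (Ideal.span (Set.range fun i : Fin n => X i - C (ℓ i)))
        ≤ nilradical _ := by
      rw [Ideal.map_span, Ideal.span_le]
      rintro x ⟨y, ⟨i, rfl⟩, rfl⟩
      refine mem_nilradical.mpr ⟨2, ?_⟩
      rw [← map_pow, hsq i]
      exact Ideal.Quotient.eq_zero_iff_mem.mpr (Ideal.subset_span ⟨i, rfl⟩)
    exact mem_nilradical.mp (hle (Ideal.mem_map_of_mem mk hmem))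
  have hu : IsUnit (mk (C (eval ℓ p))) := (hℓ.isUnit.map C).map mk
  have heq : C (eval ℓ p) + (p - C (eval ℓ p)) = p := by ring
  have := hnil.isUnit_add_left_of_commute hu (Commute.all _ _)
  rw [← RingHom.map_add mk, heq] at this
  exact this
end

section
/- Let F be a field of characteristic 2, ℓ ∈ Fⁿ, R = F[z]/⟨z₁²+ℓ₁²,…,zₙ²+ℓₙ²⟩. Call r ∈ R linear if r is the image of a polynomial of total degree at most 1. Suppose A = [L₁, c; c, L₂] is a symmetric 2×2 matrix over R with L₁, L₂ linear, c ∈ F a constant, and L₂ invertible in R. Then (det A)·L₂⁻¹ is linear in R. -/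
/-!
In characteristic 2 squaring is a ring endomorphism, so in `R` every `r` satisfies `r² = |r|²`,
where `|r| ∈ F` is evaluation at `ℓ` (well defined since `ℓᵢ² + ℓᵢ² = 0`). Hence
`L₂⁻¹ = |L₂|⁻² L₂`, and `(det A) L₂⁻¹ = (L₁ L₂ - c²) |L₂|⁻² L₂ = L₁ - c² |L₂|⁻² L₂`
is an `F`-linear combination of the linear elements `L₁` and `L₂`.
-/

open MvPolynomial Matrix

section SquareOfScalar

variable {F A : Type*} [Field F] [CommRing A] [Algebra F A]

/-- With the convention `Ring.inverse r = 0` for non-units, this holds also when `a = 0`. -/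
theorem Ring.inverse_eq_algebraMap_inv_mul_of_sq_eq {r : A} {a : F}
    (h : r ^ 2 = algebraMap F A a) : Ring.inverse r = algebraMap F A a⁻¹ * r := by
  rcases eq_or_ne a 0 with rfl | ha
  · by_cases hr : IsUnit r
    · have h01 : (0 : A) = 1 := by
        have := hr.pow 2
        rwa [h, map_zero, isUnit_zero_iff] at this
      have := subsingleton_of_zero_eq_one h01
      exact Subsingleton.elim _ _
    · simp [Ring.inverse_non_unit _ hr]
  · have hmul : r * (algebraMap F A a⁻¹ * r) = 1 := by
      rw [mul_left_comm, ← sq, h, ← map_mul, inv_mul_cancel₀ ha, map_one]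
    calc Ring.inverse r = Ring.inverse r * (r * (algebraMap F A a⁻¹ * r)) := by rw [hmul, mul_one]
      _ = algebraMap F A a⁻¹ * r := Ring.inverse_mul_cancel_left _ _ (.of_mul_eq_one _ hmul)

/-- The coefficient `a⁻¹ * a` is `1`, or `0` when `a = 0` (then `Ring.inverse L₂ = 0`). -/
theorem Matrix.det_fin_two_mul_inverse_of_sq_eq (L₁ L₂ : A) (c : F) {a : F}
    (h : L₂ ^ 2 = algebraMap F A a) :
    (!![L₁, algebraMap F A c; algebraMap F A c, L₂]).det * Ring.inverse L₂
      = (a⁻¹ * a) • L₁ - (c ^ 2 * a⁻¹) • L₂ := by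
  rw [Ring.inverse_eq_algebraMap_inv_mul_of_sq_eq h, det_fin_two_of, Algebra.smul_def,
    Algebra.smul_def, map_mul, map_mul, map_pow, ← h]
  ring

end SquareOfScalar

section Quotient

variable {σ R : Type*} [CommRing R]

noncomputable def linearElements (I : Ideal (MvPolynomial σ R)) :
    Submodule R (MvPolynomial σ R ⧸ I) :=
  (restrictTotalDegree σ R 1).map (Ideal.Quotient.mkₐ R I).toLinearMap

theorem mem_linearElements {I : Ideal (MvPolynomial σ R)} {r : MvPolynomial σ R ⧸ I} :
    r ∈ linearElements I ↔
      ∃ p : MvPolynomial σ R, p.totalDegree ≤ 1 ∧ Ideal.Quotient.mk I p = r := by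
  simp [linearElements, mem_restrictTotalDegree]

variable (ℓ : σ → R)

noncomputable def squareRelIdeal : Ideal (MvPolynomial σ R) :=
  Ideal.span (Set.range fun i => X i ^ 2 + C (ℓ i ^ 2))

variable [CharP R 2]

theorem squareRelIdeal_le_ker_eval : squareRelIdeal ℓ ≤ RingHom.ker (eval ℓ) := by
  rw [squareRelIdeal, Ideal.span_le]
  rintro _ ⟨i, rfl⟩
  simp [CharTwo.add_self_eq_zero]

/-- The absolute value `|r|` of the paper. -/
noncomputable def quotientEval : MvPolynomial σ R ⧸ squareRelIdeal ℓ →+* R :=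
  Ideal.Quotient.lift _ (eval ℓ) (squareRelIdeal_le_ker_eval ℓ)

theorem sq_eq_algebraMap_quotientEval (r : MvPolynomial σ R ⧸ squareRelIdeal ℓ) :
    r ^ 2 = algebraMap R _ (quotientEval ℓ r ^ 2) := by
  obtain ⟨p, rfl⟩ := Ideal.Quotient.mk_surjective r
  have hfrob : (Ideal.Quotient.mk (squareRelIdeal ℓ)).comp (frobenius (MvPolynomial σ R) 2)
      = (Ideal.Quotient.mk _).comp (C.comp ((frobenius R 2).comp (eval ℓ))) := by
    apply MvPolynomial.ringHom_ext
    · simp [frobenius_def]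
    · intro i
      rw [RingHom.comp_apply, RingHom.comp_apply, Ideal.Quotient.eq, CharTwo.sub_eq_add]
      exact Ideal.subset_span ⟨i, by simp [frobenius_def]⟩
  rw [← map_pow]
  exact congrArg (· p) hfrob

end Quotient

theorem stmt12_general (F : Type*) [Field F] [CharP F 2] (n : ℕ) (ℓ : Fin n → F)
    (L₁ L₂ : MvPolynomial (Fin n) F ⧸
        Ideal.span (Set.range fun i : Fin n => X i ^ 2 + C (ℓ i ^ 2)))
    (c : F)
    (hL₁ : ∃ p : MvPolynomial (Fin n) F, p.totalDegree ≤ 1 ∧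
      Ideal.Quotient.mk (Ideal.span (Set.range fun i : Fin n => X i ^ 2 + C (ℓ i ^ 2))) p = L₁)
    (hL₂ : ∃ p : MvPolynomial (Fin n) F, p.totalDegree ≤ 1 ∧
      Ideal.Quotient.mk (Ideal.span (Set.range fun i : Fin n => X i ^ 2 + C (ℓ i ^ 2))) p = L₂) :
    ∃ p : MvPolynomial (Fin n) F, p.totalDegree ≤ 1 ∧
      Ideal.Quotient.mk (Ideal.span (Set.range fun i : Fin n => X i ^ 2 + C (ℓ i ^ 2))) p
        = (!![L₁, algebraMap F _ c; algebraMap F _ c, L₂]).det * Ring.inverse L₂ := by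
  have hdet := det_fin_two_mul_inverse_of_sq_eq L₁ L₂ c (sq_eq_algebraMap_quotientEval ℓ L₂)
  obtain ⟨p, hp, hpL⟩ := mem_linearElements.mp <|
    sub_mem (Submodule.smul_mem _ _ (mem_linearElements.mpr hL₁))
      (Submodule.smul_mem _ _ (mem_linearElements.mpr hL₂))
  exact ⟨p, hp, hpL.trans hdet.symm⟩

/-- base case of the linearity theorem.  In
`R = F[z]/⟨z₁²+ℓ₁²,…,zₙ²+ℓₙ²⟩` (`char F = 2`), if `A = [L₁, c; c, L₂]` with
`L₁, L₂` linear (images of polynomials of total degree ≤ 1), `c ∈ F`, and `L₂`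
invertible, then `(det A) · L₂⁻¹` is linear. -/
theorem stmt12 (F : Type*) [Field F] [CharP F 2] (n : ℕ) (ℓ : Fin n → F)
    (L₁ L₂ : MvPolynomial (Fin n) F ⧸
        Ideal.span (Set.range fun i : Fin n => X i ^ 2 + C (ℓ i ^ 2)))
    (c : F)
    (hL₁ : ∃ p : MvPolynomial (Fin n) F, p.totalDegree ≤ 1 ∧
      Ideal.Quotient.mk (Ideal.span (Set.range fun i : Fin n => X i ^ 2 + C (ℓ i ^ 2))) p = L₁)
    (hL₂ : ∃ p : MvPolynomial (Fin n) F, p.totalDegree ≤ 1 ∧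
      Ideal.Quotient.mk (Ideal.span (Set.range fun i : Fin n => X i ^ 2 + C (ℓ i ^ 2))) p = L₂)
    (hunit : IsUnit L₂) :
    ∃ p : MvPolynomial (Fin n) F, p.totalDegree ≤ 1 ∧
      Ideal.Quotient.mk (Ideal.span (Set.range fun i : Fin n => X i ^ 2 + C (ℓ i ^ 2))) p
        = (!![L₁, algebraMap F _ c; algebraMap F _ c, L₂]).det * Ring.inverse L₂ :=
  stmt12_general F n ℓ L₁ L₂ c hL₁ hL₂
end

section
/- Let F be a field of characteristic 2, and let p, q ∈ F[z₁,…,zₙ] with q ≠ 0. Suppose pq is a multilinear polynomial (degree at most 1 in each variable) and the 1×1 matrix [p/q] over F(z) admits a symmetric Bessmertnyĭ realization, i.e., p/q is the Schur complement A11 - A12 A22⁻¹ A21 of a symmetric affine linear pencil A(z) = A₀ + z₁A₁ + ⋯ + zₙAₙ with symmetric A_i over F. Then pq is linear (total degree at most 1). -/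
open MvPolynomial Matrix

/-- A scalar rational function `f ∈ F(z)` has a symmetric Bessmertnyĭ realization if
it is the Schur complement of a symmetric affine linear matrix pencil
`A(z) = A₀ + z₁A₁ + ⋯ + zₙAₙ` with symmetric coefficient matrices over `F`,
partitioned with a `1×1` upper-left block and invertible `(2,2)`-block. -/
def HasSymBR {F : Type*} [Field F] {n : ℕ}
    (f : FractionRing (MvPolynomial (Fin n) F)) : Prop :=
  ∃ (s : ℕ) (A₀ : Matrix (Fin 1 ⊕ Fin s) (Fin 1 ⊕ Fin s) F)
      (A : Fin n → Matrix (Fin 1 ⊕ Fin s) (Fin 1 ⊕ Fin s) F),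
    A₀ᵀ = A₀ ∧ (∀ i, (A i)ᵀ = A i) ∧
    (let P : Matrix (Fin 1 ⊕ Fin s) (Fin 1 ⊕ Fin s)
        (FractionRing (MvPolynomial (Fin n) F)) :=
      A₀.map (fun x => algebraMap (MvPolynomial (Fin n) F) _ (C x)) +
        ∑ i, algebraMap (MvPolynomial (Fin n) F) (FractionRing (MvPolynomial (Fin n) F)) (X i) •
          (A i).map (fun x => algebraMap (MvPolynomial (Fin n) F) _ (C x))
     IsUnit P.toBlocks₂₂ ∧
       P.toBlocks₁₁ - P.toBlocks₁₂ * P.toBlocks₂₂⁻¹ * P.toBlocks₂₁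
         = Matrix.of fun _ _ => f)

/-!
For `w = (1, -A₂₂⁻¹A₂₁)` the lower block of `A(z) w` vanishes, so the Schur complement is the
quadratic form: `p/q = wᵀ A(z) w`. In characteristic 2 the quadratic form of a symmetric matrix only sees the
diagonal, hence `p/q = Σⱼ dⱼ wⱼ²` with `dⱼ = A(z)ⱼⱼ` affine linear, and clearing denominators
gives `p q b² = Σⱼ dⱼ aⱼ²` in `F[z]` with `b ≠ 0`. Squares have zero partial derivatives in
characteristic 2 and the `dⱼ` have zero second derivatives, so all second partial derivatives of
`pq` vanish. For a multilinear polynomial the mixed partial `∂ⱼ∂ᵢ` picks out, with coefficient 1,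
every monomial containing `zᵢzⱼ`; so `pq` has no monomial of degree `≥ 2`.
-/

theorem Matrix.dotProduct_fromBlocks_mulVec_eq_schur_complement {R l m : Type*} [CommRing R]
    [Fintype l] [Fintype m] [DecidableEq m] (A : Matrix l l R) (B : Matrix l m R)
    (C : Matrix m l R) (D : Matrix m m R) (hD : IsUnit D.det) (x : l → R) :
    (x ⊕ᵥ -(D⁻¹ * C) *ᵥ x) ⬝ᵥ fromBlocks A B C D *ᵥ (x ⊕ᵥ -(D⁻¹ * C) *ᵥ x) =
      x ⬝ᵥ (A - B * D⁻¹ * C) *ᵥ x := by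
  have hlower : C *ᵥ x + D *ᵥ -(D⁻¹ * C) *ᵥ x = 0 := by
    rw [mulVec_mulVec, Matrix.mul_neg, ← Matrix.mul_assoc, mul_nonsing_inv _ hD, Matrix.one_mul,
      neg_mulVec, add_neg_cancel]
  rw [fromBlocks_mulVec, Sum.elim_comp_inl, Sum.elim_comp_inr, hlower,
    sumElim_dotProduct_sumElim, dotProduct_zero, add_zero, sub_mulVec, Matrix.mul_assoc,
    ← mulVec_mulVec, neg_mulVec, mulVec_neg, sub_eq_add_neg]

theorem Finset.sum_sum_eq_sum_diag_of_charTwo {R ι : Type*} [Semiring R] [CharP R 2]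
    [Fintype ι] (f : ι → ι → R) (hf : ∀ j k, f j k = f k j) :
    ∑ j, ∑ k, f j k = ∑ j, f j j := by
  classical
  have hoffDiag : ∑ jk ∈ univ.offDiag, f jk.1 jk.2 = 0 := by
    refine Finset.sum_involution (fun jk _ ↦ jk.swap) (fun jk _ ↦ ?_) (fun jk hjk _ h ↦ ?_)
      (fun jk hjk ↦ by simpa [eq_comm] using hjk) (fun jk _ ↦ jk.swap_swap)
    · rw [Prod.fst_swap, Prod.snd_swap, hf jk.2, CharTwo.add_self_eq_zero]
    · exact (Finset.mem_offDiag.mp hjk).2.2 (congrArg Prod.snd h)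
  rw [← Finset.sum_product', ← Finset.diag_union_offDiag,
    Finset.sum_union (Finset.disjoint_diag_offDiag _), Finset.sum_diag, hoffDiag, add_zero]

theorem Matrix.dotProduct_mulVec_self_eq_sum_diag_of_charTwo {R ι : Type*} [CommSemiring R]
    [CharP R 2] [Fintype ι] (M : Matrix ι ι R) (hM : Mᵀ = M) (w : ι → R) :
    w ⬝ᵥ M *ᵥ w = ∑ j, M j j * w j ^ 2 := by
  simp only [dotProduct, mulVec, Finset.mul_sum]
  rw [Finset.sum_sum_eq_sum_diag_of_charTwo]
  · exact Finset.sum_congr rfl fun j _ ↦ by ring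
  · intro j k
    rw [← hM, transpose_apply, hM]
    ring

section Pencil

variable {σ ι F : Type*} [Fintype σ] [CommSemiring F]

noncomputable def affinePencil (A₀ : Matrix ι ι F) (A : σ → Matrix ι ι F) :
    Matrix ι ι (MvPolynomial σ F) :=
  A₀.map C + ∑ i, (X i : MvPolynomial σ F) • (A i).map C

theorem affinePencil_apply (A₀ : Matrix ι ι F) (A : σ → Matrix ι ι F) (a b : ι) :
    affinePencil A₀ A a b = C (A₀ a b) + ∑ i, X i * C (A i a b) := by
  simp [affinePencil, Matrix.sum_apply]

theorem transpose_affinePencil {A₀ : Matrix ι ι F} {A : σ → Matrix ι ι F}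
    (hA₀ : A₀ᵀ = A₀) (hA : ∀ i, (A i)ᵀ = A i) :
    (affinePencil A₀ A)ᵀ = affinePencil A₀ A := by
  simp only [affinePencil, transpose_add, transpose_sum, transpose_smul, ← transpose_map, hA₀,
    hA]

theorem pderiv_affinePencil_apply [DecidableEq σ] (A₀ : Matrix ι ι F)
    (A : σ → Matrix ι ι F) (i : σ) (a b : ι) :
    pderiv i (affinePencil A₀ A a b) = C (A i a b) := by
  simp [affinePencil_apply, pderiv_X, Pi.single_apply]

theorem map_affinePencil {K : Type*} [CommSemiring K] [Algebra (MvPolynomial σ F) K]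
    (A₀ : Matrix ι ι F) (A : σ → Matrix ι ι F) :
    (affinePencil A₀ A).map (algebraMap (MvPolynomial σ F) K) =
      A₀.map (fun x ↦ algebraMap (MvPolynomial σ F) K (C x)) +
        ∑ i, algebraMap (MvPolynomial σ F) K (X i) •
          (A i).map (fun x ↦ algebraMap (MvPolynomial σ F) K (C x)) := by
  ext a b
  simp only [map_apply, Matrix.add_apply, Matrix.sum_apply, Matrix.smul_apply, smul_eq_mul,
    affinePencil_apply, map_add, map_sum, map_mul]

end Pencil

theorem IsFractionRing.exists_mul_mul_sq_eq_sum_mul_sq {R K ι : Type*} [CommRing R] [IsDomain R]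
    [Field K] [Algebra R K] [IsFractionRing R K] [Fintype ι] {p q : R} (hq : q ≠ 0)
    (d : ι → R) (w : ι → K)
    (h : algebraMap R K p / algebraMap R K q = ∑ j, algebraMap R K (d j) * w j ^ 2) :
    ∃ b ≠ (0 : R), ∃ a : ι → R, p * q * b ^ 2 = ∑ j, d j * a j ^ 2 := by
  obtain ⟨b, hb⟩ := IsLocalization.exist_integer_multiples_of_finite (nonZeroDivisors R) w
  choose a ha using hb
  refine ⟨b, nonZeroDivisors.coe_ne_zero b, fun j ↦ q * a j, IsFractionRing.injective R K ?_⟩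
  have hq' : algebraMap R K q ≠ 0 := (IsFractionRing.to_map_ne_zero_of_mem_nonZeroDivisors
    (mem_nonZeroDivisors_of_ne_zero hq))
  simp only [map_mul, map_pow, map_sum, ha, Algebra.smul_def]
  rw [div_eq_iff hq'] at h
  rw [h, Finset.sum_mul, Finset.sum_mul, Finset.sum_mul]
  exact Finset.sum_congr rfl fun j _ ↦ by ring

theorem MvPolynomial.pderiv_mul_sq_of_charTwo {σ R : Type*} [CommRing R] [CharP R 2]
    (i : σ) (f g : MvPolynomial σ R) : pderiv i (f * g ^ 2) = pderiv i f * g ^ 2 := by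
  rw [pderiv_mul, pderiv_pow, Nat.cast_ofNat, CharTwo.two_eq_zero (R := MvPolynomial σ R),
    zero_mul, zero_mul, mul_zero, add_zero]

theorem MvPolynomial.pderiv_pderiv_eq_zero_of_mul_sq_eq_sum_mul_sq {σ R ι : Type*} [CommRing R]
    [IsDomain R] [CharP R 2] [Fintype ι] {g b : MvPolynomial σ R} (hb : b ≠ 0)
    {d a : ι → MvPolynomial σ R} (hd : ∀ i i' j, pderiv i' (pderiv i (d j)) = 0)
    (h : g * b ^ 2 = ∑ j, d j * a j ^ 2) (i i' : σ) : pderiv i' (pderiv i g) = 0 := by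
  have hderiv := congrArg (fun f ↦ pderiv i' (pderiv i f)) h
  simp only [map_sum, pderiv_mul_sq_of_charTwo, hd, zero_mul, Finset.sum_const_zero] at hderiv
  exact (mul_eq_zero.mp hderiv).resolve_right (pow_ne_zero 2 hb)

theorem MvPolynomial.totalDegree_le_one_of_pderiv_pderiv_eq_zero {σ R : Type*} [CommSemiring R]
    [DecidableEq σ] {g : MvPolynomial σ R} (hml : ∀ i, g.degreeOf i ≤ 1)
    (h : ∀ i j, i ≠ j → pderiv j (pderiv i g) = 0) : g.totalDegree ≤ 1 := by
  refine Finset.sup_le fun m hm ↦ ?_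
  have hm1 : ∀ k, m k ≤ 1 := fun k ↦ (monomial_le_degreeOf k hm).trans (hml k)
  by_contra! hdeg
  have hcard : 1 < m.support.card := by
    refine hdeg.trans_le ?_
    rw [Finsupp.sum]
    simpa using Finset.sum_le_card_nsmul m.support m 1 fun k _ ↦ hm1 k
  obtain ⟨i, hi, j, hj, hij⟩ := Finset.one_lt_card.mp hcard
  set μ := (m.erase i).erase j
  have hμ : μ + Finsupp.single j 1 + Finsupp.single i 1 = m := by
    ext k
    have hmk := hm1 k
    have hi0 := Finsupp.mem_support_iff.mp hi
    have hj0 := Finsupp.mem_support_iff.mp hj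
    simp only [μ, Finsupp.add_apply, Finsupp.erase_apply, Finsupp.single_apply]
    split_ifs <;> subst_vars <;> first | omega | contradiction
  have hcoeff := congrArg (coeff μ) (h i j hij)
  rw [coeff_pderiv, coeff_pderiv, hμ] at hcoeff
  simp only [μ, Finsupp.coe_add, Pi.add_apply, ne_eq, hij, not_false_eq_true, Finsupp.erase_ne,
    Finsupp.erase_same, Finsupp.single_eq_of_ne, add_zero, Nat.cast_zero, zero_add, mul_one,
    coeff_zero] at hcoeff
  exact MvPolynomial.mem_support_iff.mp hm hcoeff

/-- over a field of characteristic 2, if `q ≠ 0`, `pq` is multilinear,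
and `p/q ∈ F(z)` has a symmetric Bessmertnyĭ realization, then `pq` is linear. -/
theorem stmt14 (F : Type*) [Field F] [CharP F 2] (n : ℕ)
    (p q : MvPolynomial (Fin n) F) (hq : q ≠ 0)
    (hml : ∀ i, (p * q).degreeOf i ≤ 1)
    (h : HasSymBR
      (algebraMap (MvPolynomial (Fin n) F) (FractionRing (MvPolynomial (Fin n) F)) p /
        algebraMap (MvPolynomial (Fin n) F) (FractionRing (MvPolynomial (Fin n) F)) q)) :
    (p * q).totalDegree ≤ 1 := by
  set K := FractionRing (MvPolynomial (Fin n) F)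
  obtain ⟨s, A₀, A, hA₀, hA, hU, hSchur⟩ := h
  have : CharP K 2 := charP_of_injective_algebraMap (algebraMap F K).injective 2
  rw [← map_affinePencil] at hU hSchur
  set P := (affinePencil A₀ A).map (algebraMap (MvPolynomial (Fin n) F) K)
  have hP : Pᵀ = P := by rw [← transpose_map, transpose_affinePencil hA₀ hA]
  set w : Fin 1 ⊕ Fin s → K := 1 ⊕ᵥ -(P.toBlocks₂₂⁻¹ * P.toBlocks₂₁) *ᵥ 1
  have hquad : algebraMap _ K p / algebraMap _ K q = w ⬝ᵥ P *ᵥ w := by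
    rw [← fromBlocks_toBlocks P, dotProduct_fromBlocks_mulVec_eq_schur_complement _ _ _ _
      ((isUnit_iff_isUnit_det _).mp hU), hSchur]
    simp [K, dotProduct, mulVec]
  rw [dotProduct_mulVec_self_eq_sum_diag_of_charTwo P hP] at hquad
  obtain ⟨b, hb, a, hpq⟩ :=
    IsFractionRing.exists_mul_mul_sq_eq_sum_mul_sq hq (fun j ↦ affinePencil A₀ A j j) w hquad
  refine totalDegree_le_one_of_pderiv_pderiv_eq_zero hml fun i i' _ ↦
    pderiv_pderiv_eq_zero_of_mul_sq_eq_sum_mul_sq hb (fun i i' j ↦ ?_) hpq i i'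
  rw [pderiv_affinePencil_apply, pderiv_C]
end

section
/- Let F be any field and k, n ≥ 1. Every matrix F(z) ∈ F(z)^{k×k} of rational functions in z₁,…,zₙ has a Bessmertnyĭ realization: there exists an affine linear matrix pencil A(z) = A₀ + z₁A₁ + ⋯ + zₙAₙ with A_i ∈ F^{m×m} for some m, partitioned as [A11 A12; A21 A22] with A22(z) invertible over F(z), such that F(z) = A11(z) - A12(z) A22(z)⁻¹ A21(z). -/
/-!
Call `M` realizable over a set `V` of entries if `M = A - B D⁻¹ C` for blocks with entries in `V`
and `D` invertible. Realizable matrices form a subring of `Matrix m m K` that is closed under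
inverses of units: sums, products and inverses are again Schur complements of explicit larger
block matrices. When `V` is the span of `1, z₁, …, zₙ`, the scalar matrices `a • 1` and `zᵢ • 1`
are trivially realizable, hence so is `p • 1` for every polynomial `p`, then
`(p / q) • 1 = (q • 1)⁻¹ * (p • 1)`, and finally every `M = ∑ (M i j • 1) * single i j 1`.
A block matrix with entries in that span is exactly an affine pencil `A₀ + ∑ zᵢ • Aᵢ`.
-/

open MvPolynomial Matrix

namespace Matrix

section Membership

variable {K : Type*} [AddGroup K] {V : AddSubgroup K} {m n o p : Type*}

theorem fromBlocks_mem_matrix {A : Matrix m n K} {B : Matrix m o K} {C : Matrix p n K}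
    {D : Matrix p o K} (hA : A ∈ V.matrix) (hB : B ∈ V.matrix) (hC : C ∈ V.matrix)
    (hD : D ∈ V.matrix) : fromBlocks A B C D ∈ V.matrix := by
  rintro (i | i) (j | j)
  exacts [hA i j, hB i j, hC i j, hD i j]

theorem fromCols_mem_matrix {A : Matrix m n K} {B : Matrix m o K} (hA : A ∈ V.matrix)
    (hB : B ∈ V.matrix) : fromCols A B ∈ V.matrix := by
  rintro i (j | j)
  exacts [hA i j, hB i j]

theorem fromRows_mem_matrix {A : Matrix n m K} {B : Matrix o m K} (hA : A ∈ V.matrix)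
    (hB : B ∈ V.matrix) : fromRows A B ∈ V.matrix := by
  rintro (i | i) j
  exacts [hA i j, hB i j]

end Membership

variable {K : Type*} [CommRing K] {V : AddSubgroup K} {m : Type*}

theorem one_mem_matrix [DecidableEq m] (h1 : (1 : K) ∈ V) : (1 : Matrix m m K) ∈ V.matrix :=
  (diagonal_mem_matrix_iff V.zero_mem).mpr fun _ => h1

variable (V) in
def IsSchurRealizable (M : Matrix m m K) : Prop :=
  ∃ (s : ℕ) (A : Matrix m m K) (B : Matrix m (Fin s) K) (C : Matrix (Fin s) m K)
    (D : Matrix (Fin s) (Fin s) K), A ∈ V.matrix ∧ B ∈ V.matrix ∧ C ∈ V.matrix ∧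
      D ∈ V.matrix ∧ IsUnit D ∧ A - B * D⁻¹ * C = M

namespace IsSchurRealizable

variable {M M₁ M₂ : Matrix m m K}

theorem of_mul_eq {ι : Type*} [Fintype ι] [DecidableEq ι] {A : Matrix m m K} {B : Matrix m ι K}
    {C : Matrix ι m K} {D : Matrix ι ι K} (W : Matrix ι m K) (hA : A ∈ V.matrix)
    (hB : B ∈ V.matrix) (hC : C ∈ V.matrix) (hD : D ∈ V.matrix) (hDu : IsUnit D)
    (hW : D * W = C) (hM : A - B * W = M) : IsSchurRealizable V M := by
  let e := Fintype.equivFin ι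
  have hDu' : IsUnit (D.submatrix e.symm e.symm) := (isUnit_submatrix_equiv _ _).mpr hDu
  have hW' : D.submatrix e.symm e.symm * W.submatrix e.symm id = C.submatrix e.symm id := by
    rw [submatrix_mul_equiv, hW]
  refine ⟨Fintype.card ι, A, B.submatrix id e.symm, C.submatrix e.symm id,
    D.submatrix e.symm e.symm, hA, submatrix_mem_matrix hB, submatrix_mem_matrix hC,
    submatrix_mem_matrix hD, hDu', ?_⟩
  have := hDu'.invertible
  rw [Matrix.mul_assoc, ← hW', inv_mul_cancel_left_of_invertible, submatrix_mul_equiv,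
    submatrix_id_id, hM]

theorem of_mem_matrix (hM : M ∈ V.matrix) : IsSchurRealizable V M :=
  of_mul_eq (B := (0 : Matrix m Empty K)) (C := 0) (D := 1) 0 hM (zero_mem _) (zero_mem _)
    (fun i => i.elim) isUnit_one (Subsingleton.elim _ _) (by simp)

theorem add (h₁ : IsSchurRealizable V M₁) (h₂ : IsSchurRealizable V M₂) :
    IsSchurRealizable V (M₁ + M₂) := by
  obtain ⟨s, A₁, B₁, C₁, D₁, hA₁, hB₁, hC₁, hD₁, hDu₁, rfl⟩ := h₁
  obtain ⟨t, A₂, B₂, C₂, D₂, hA₂, hB₂, hC₂, hD₂, hDu₂, rfl⟩ := h₂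
  have := hDu₁.invertible
  have := hDu₂.invertible
  refine of_mul_eq (fromRows (D₁⁻¹ * C₁) (D₂⁻¹ * C₂)) (add_mem hA₁ hA₂)
    (fromCols_mem_matrix hB₁ hB₂) (fromRows_mem_matrix hC₁ hC₂)
    (fromBlocks_mem_matrix hD₁ (zero_mem _) (zero_mem _) hD₂)
    (isUnit_fromBlocks_zero₂₁.mpr ⟨hDu₁, hDu₂⟩) ?_ ?_
  · simp [fromBlocks_mul_fromRows]
  · rw [fromCols_mul_fromRows]
    simp only [Matrix.mul_assoc]
    abel

variable [Fintype m] [DecidableEq m]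

/-- The inner unknowns are `(M₂ x, D₂⁻¹ C₂ x, D₁⁻¹ C₁ M₂ x)`: first evaluate `M₂`, then `M₁`. -/
theorem mul (h₁ : IsSchurRealizable V M₁) (h₂ : IsSchurRealizable V M₂) (h1 : (1 : K) ∈ V) :
    IsSchurRealizable V (M₁ * M₂) := by
  obtain ⟨s, A₁, B₁, C₁, D₁, hA₁, hB₁, hC₁, hD₁, hDu₁, rfl⟩ := h₁
  obtain ⟨t, A₂, B₂, C₂, D₂, hA₂, hB₂, hC₂, hD₂, hDu₂, hM₂⟩ := h₂
  have := hDu₁.invertible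
  have := hDu₂.invertible
  refine of_mul_eq (fromRows (fromRows M₂ (D₂⁻¹ * C₂)) (D₁⁻¹ * C₁ * M₂)) (zero_mem _)
    (fromCols_mem_matrix (fromCols_mem_matrix (neg_mem hA₁) (zero_mem _)) hB₁)
    (fromRows_mem_matrix (fromRows_mem_matrix hA₂ hC₂) (zero_mem _))
    (fromBlocks_mem_matrix (fromBlocks_mem_matrix (one_mem_matrix h1) hB₂ (zero_mem _) hD₂)
      (zero_mem _) (fromCols_mem_matrix (neg_mem hC₁) (zero_mem _)) hD₁)
    (isUnit_fromBlocks_zero₁₂.mpr ⟨isUnit_fromBlocks_zero₂₁.mpr ⟨isUnit_one, hDu₂⟩, hDu₁⟩) ?_ ?_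
  · simp [fromBlocks_mul_fromRows, fromCols_mul_fromRows, ← hM₂, Matrix.mul_assoc]
  · simp only [fromCols_mul_fromRows, Matrix.zero_mul, add_zero, Matrix.sub_mul, Matrix.mul_assoc,
      Matrix.neg_mul, zero_sub, neg_add_eq_sub, neg_sub]

/-- The inner unknowns are `(M⁻¹ x, -D⁻¹ C M⁻¹ x)`, so the first block row of `D W = C`
reads `M (M⁻¹ x) = x`. -/
theorem inv (h : IsSchurRealizable V M) (hM : IsUnit M) (h1 : (1 : K) ∈ V) :
    IsSchurRealizable V M⁻¹ := by
  obtain ⟨s, A, B, C, D, hA, hB, hC, hD, hDu, rfl⟩ := h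
  have := hDu.invertible
  have := hM.invertible
  refine of_mul_eq (fromRows (A - B * D⁻¹ * C)⁻¹ (-(D⁻¹ * C * (A - B * D⁻¹ * C)⁻¹))) (zero_mem _)
    (fromCols_mem_matrix (neg_mem (one_mem_matrix h1)) (zero_mem _))
    (fromRows_mem_matrix (one_mem_matrix h1) (zero_mem _))
    (fromBlocks_mem_matrix hA hB hC hD) ?_ ?_ ?_
  · rwa [isUnit_fromBlocks_iff_of_invertible₂₂, invOf_eq_nonsing_inv]
  · simp only [fromBlocks_mul_fromRows, Matrix.mul_neg, ← sub_eq_add_neg, ← Matrix.mul_assoc,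
      ← Matrix.sub_mul]
    simp
  · simp [fromCols_mul_fromRows]

end IsSchurRealizable

variable [Fintype m] [DecidableEq m]

variable (V) in
def schurRealizableSubring (h1 : (1 : K) ∈ V) : Subring (Matrix m m K) where
  carrier := {M | IsSchurRealizable V M}
  mul_mem' ha hb := ha.mul hb h1
  one_mem' := .of_mem_matrix (one_mem_matrix h1)
  add_mem' := .add
  zero_mem' := .of_mem_matrix (zero_mem _)
  neg_mem' h := by
    simpa using (IsSchurRealizable.of_mem_matrix (neg_mem (one_mem_matrix h1))).mul h h1

end Matrix

namespace MvPolynomial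

variable (σ F K : Type*) [Field F] [Field K] [Algebra F K] [Algebra (MvPolynomial σ F) K]

def affineFunctions : Submodule F K :=
  Submodule.span F (insert 1 (Set.range fun i => algebraMap (MvPolynomial σ F) K (X i)))

variable {σ F K}

theorem one_mem_affineFunctions : (1 : K) ∈ affineFunctions σ F K :=
  Submodule.subset_span (Set.mem_insert _ _)

theorem algebraMap_X_mem_affineFunctions (i : σ) :
    algebraMap (MvPolynomial σ F) K (X i) ∈ affineFunctions σ F K :=
  Submodule.subset_span (Set.mem_insert_of_mem _ ⟨i, rfl⟩)

variable [IsScalarTower F (MvPolynomial σ F) K]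

theorem algebraMap_C_mem_affineFunctions (a : F) :
    algebraMap (MvPolynomial σ F) K (C a) ∈ affineFunctions σ F K := by
  rw [← algebraMap_eq, ← IsScalarTower.algebraMap_apply, Algebra.algebraMap_eq_smul_one]
  exact Submodule.smul_mem _ _ one_mem_affineFunctions

theorem exists_eq_of_mem_affineFunctions [Fintype σ] {x : K} (hx : x ∈ affineFunctions σ F K) :
    ∃ (a₀ : F) (a : σ → F), x = algebraMap (MvPolynomial σ F) K (C a₀) +
      ∑ i, algebraMap (MvPolynomial σ F) K (X i) * algebraMap (MvPolynomial σ F) K (C (a i)) := by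
  obtain ⟨a₀, y, hy, rfl⟩ := Submodule.mem_span_insert.mp hx
  obtain ⟨a, rfl⟩ := (Submodule.mem_span_range_iff_exists_fun F).mp hy
  refine ⟨a₀, a, ?_⟩
  simp only [← algebraMap_eq, ← IsScalarTower.algebraMap_apply, Algebra.smul_def, one_mul,
    mul_comm (algebraMap F K _)]

theorem exists_pencil_of_mem_matrix [Fintype σ] {ι κ : Type*} {P : Matrix ι κ K}
    (hP : P ∈ (affineFunctions σ F K).toAddSubgroup.matrix) :
    ∃ (A₀ : Matrix ι κ F) (A : σ → Matrix ι κ F),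
      P = A₀.map (fun x => algebraMap (MvPolynomial σ F) K (C x)) +
        ∑ i, algebraMap (MvPolynomial σ F) K (X i) •
          (A i).map (fun x => algebraMap (MvPolynomial σ F) K (C x)) := by
  choose a₀ a ha using fun p q => exists_eq_of_mem_affineFunctions (hP p q)
  refine ⟨.of a₀, fun i => .of fun p q => a p q i, ?_⟩
  ext p q
  simp only [ha p q, Matrix.add_apply, map_apply, Matrix.sum_apply, Matrix.smul_apply,
    smul_eq_mul, of_apply]

variable [IsFractionRing (MvPolynomial σ F) K] {m : Type*} [Fintype m] [DecidableEq m]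

theorem isSchurRealizable_affineFunctions (M : Matrix m m K) :
    IsSchurRealizable (affineFunctions σ F K).toAddSubgroup M := by
  set R := schurRealizableSubring (m := m) (affineFunctions σ F K).toAddSubgroup
    one_mem_affineFunctions
  have hpoly (p : MvPolynomial σ F) : scalar m (algebraMap _ K p) ∈ R := by
    induction p using MvPolynomial.induction_on with
    | C a => exact .of_mem_matrix ((diagonal_mem_matrix_iff (zero_mem _)).mpr
        fun _ => algebraMap_C_mem_affineFunctions a)
    | add p q hp hq => simpa only [map_add] using add_mem hp hq
    | mul_X p i hp =>
      rw [map_mul, map_mul]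
      exact mul_mem hp <| .of_mem_matrix ((diagonal_mem_matrix_iff (zero_mem _)).mpr
        fun _ => algebraMap_X_mem_affineFunctions i)
  have hscalar (x : K) : scalar m x ∈ R := by
    obtain ⟨p, q, hq, rfl⟩ := IsFractionRing.div_surjective (MvPolynomial σ F) x
    have hq' : algebraMap _ K q ≠ 0 := IsFractionRing.to_map_ne_zero_of_mem_nonZeroDivisors hq
    have hinv : (scalar m (algebraMap _ K q))⁻¹ = scalar m (algebraMap _ K q)⁻¹ :=
      inv_eq_left_inv (by rw [← map_mul (scalar m), inv_mul_cancel₀ hq', map_one])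
    rw [div_eq_mul_inv, map_mul, ← hinv]
    exact mul_mem (hpoly p)
      ((hpoly q).inv ((IsUnit.mk0 _ hq').map (scalar m)) one_mem_affineFunctions)
  change M ∈ R
  rw [matrix_eq_sum_single M]
  refine sum_mem fun i _ => sum_mem fun j _ => ?_
  rw [← mul_one (M i j), ← smul_eq_mul, ← smul_single, smul_eq_diagonal_mul, ← scalar_apply]
  exact mul_mem (hscalar _) (.of_mem_matrix ((single_mem_matrix (zero_mem _)).mpr
    one_mem_affineFunctions))

end MvPolynomial

theorem stmt19_general (F : Type*) [Field F] (n k : ℕ)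
    (M : Matrix (Fin k) (Fin k) (FractionRing (MvPolynomial (Fin n) F))) :
    ∃ (s : ℕ) (A₀ : Matrix (Fin k ⊕ Fin s) (Fin k ⊕ Fin s) F)
        (A : Fin n → Matrix (Fin k ⊕ Fin s) (Fin k ⊕ Fin s) F),
      let P : Matrix (Fin k ⊕ Fin s) (Fin k ⊕ Fin s)
          (FractionRing (MvPolynomial (Fin n) F)) :=
        A₀.map (fun x => algebraMap (MvPolynomial (Fin n) F) _ (C x)) +
          ∑ i, algebraMap (MvPolynomial (Fin n) F)
              (FractionRing (MvPolynomial (Fin n) F)) (X i) •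
            (A i).map (fun x => algebraMap (MvPolynomial (Fin n) F) _ (C x))
      IsUnit P.toBlocks₂₂ ∧
        P.toBlocks₁₁ - P.toBlocks₁₂ * P.toBlocks₂₂⁻¹ * P.toBlocks₂₁ = M := by
  obtain ⟨s, A, B, C, D, hA, hB, hC, hD, hDu, hM⟩ :=
    isSchurRealizable_affineFunctions (σ := Fin n) (F := F) M
  obtain ⟨A₀, A', hP⟩ := exists_pencil_of_mem_matrix (fromBlocks_mem_matrix hA hB hC hD)
  refine ⟨s, A₀, A', ?_⟩
  dsimp only
  rw [← hP, toBlocks_fromBlocks₁₁, toBlocks_fromBlocks₁₂, toBlocks_fromBlocks₂₁,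
    toBlocks_fromBlocks₂₂]
  exact ⟨hDu, hM⟩

/-- every `k×k` matrix of rational functions in `n` variables over any
field `F` has a Bessmertnyĭ realization: it is the Schur complement, with respect to
the `(2,2)`-block, of an affine linear matrix pencil `A₀ + z₁A₁ + ⋯ + zₙAₙ` with
constant coefficient matrices `Aᵢ` over `F` and invertible `(2,2)`-block. -/
theorem stmt19 (F : Type*) [Field F] (n k : ℕ) (hn : 1 ≤ n) (hk : 1 ≤ k)
    (M : Matrix (Fin k) (Fin k) (FractionRing (MvPolynomial (Fin n) F))) :
    ∃ (s : ℕ) (A₀ : Matrix (Fin k ⊕ Fin s) (Fin k ⊕ Fin s) F)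
        (A : Fin n → Matrix (Fin k ⊕ Fin s) (Fin k ⊕ Fin s) F),
      let P : Matrix (Fin k ⊕ Fin s) (Fin k ⊕ Fin s)
          (FractionRing (MvPolynomial (Fin n) F)) :=
        A₀.map (fun x => algebraMap (MvPolynomial (Fin n) F) _ (C x)) +
          ∑ i, algebraMap (MvPolynomial (Fin n) F)
              (FractionRing (MvPolynomial (Fin n) F)) (X i) •
            (A i).map (fun x => algebraMap (MvPolynomial (Fin n) F) _ (C x))
      IsUnit P.toBlocks₂₂ ∧
        P.toBlocks₁₁ - P.toBlocks₁₂ * P.toBlocks₂₂⁻¹ * P.toBlocks₂₁ = M :=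
  stmt19_general F n k M
end
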